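/- arXiv:1303.1088 — 2 statements merged into one kernel-verified Lean document; each statement's English description precedes it below -/
import Mathlib

section
/- Behavior of an equivariant holomorphic map at a cusp: Let p : ℍ → ℍ be a holomorphic map and let λ be a nonzero real number such that p(z + 1) = p(z) + λ for all z ∈ ℍ. Then Im(p(z)) tends to infinity as Im(z) tends to infinity; i.e. the function z ↦ Im(p z) tends to atTop along the filter comap Im atTop on ℍ. -/
/-!
Fix `z` with `Im z > 1` and compose `p` with the Cayley map `u ↦ (u - p z) / (u - conj (p z))`,
which sends `ℍ` into the unit disc and `p z` to `0`. On the Euclidean disc of radius `Im z`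
around `z`, which lies in `ℍ`, the Schwarz lemma bounds the value of this composite at `z + 1` by
`1 / Im z`. By equivariance that value is `λ / (λ + 2 i Im (p z))`, so
`|λ| Im z ≤ |λ| + 2 Im (p z)`, and `Im (p z)` grows at least linearly in `Im z`.
-/

open UpperHalfPlane Filter

/-- A map `p : ℍ → ℍ` is holomorphic if `z ↦ (p z : ℂ)` is complex differentiable
at every point of the (open) upper half-plane. -/
def IsHolomorphicMap (p : ℍ → ℍ) : Prop :=
  DifferentiableOn ℂ
    (fun z : ℂ => if hz : 0 < z.im then ((p ⟨z, hz⟩ : ℂ)) else 0)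
    {z : ℂ | 0 < z.im}

open Metric Set ComplexConjugate

namespace UpperHalfPlane

/-- `IsHolomorphicMap p` unfolds to complex differentiability of this function on `{z | 0 < z.im}`. -/
noncomputable def extendByZero (p : ℍ → ℍ) : ℂ → ℂ :=
  fun z => if hz : 0 < z.im then (p ⟨z, hz⟩ : ℂ) else 0

theorem extendByZero_coe (p : ℍ → ℍ) (z : ℍ) : extendByZero p z = p z :=
  dif_pos z.im_pos

theorem ball_coe_im_subset (z : ℍ) : ball (z : ℂ) z.im ⊆ {w : ℂ | 0 < w.im} := fun w hw => by
  have h := (Complex.abs_im_le_norm (w - z)).trans_lt (mem_ball_iff_norm.1 hw)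
  rw [Complex.sub_im, coe_im, abs_lt] at h
  exact show 0 < w.im by linarith

theorem coe_ne_conj_coe (z w : ℍ) : (z : ℂ) ≠ conj (w : ℂ) := fun h => by
  have h_im := congrArg Complex.im h
  rw [Complex.conj_im, coe_im, coe_im] at h_im
  linarith [z.im_pos, w.im_pos]

theorem dist_coe_div_dist_coe_conj_lt_one (z w : ℍ) :
    dist (z : ℂ) w / dist (z : ℂ) (conj (w : ℂ)) < 1 :=
  tanh_half_dist z w ▸ Real.tanh_lt_one _

end UpperHalfPlane

/-- The Schwarz lemma in the Cayley coordinate centred at `p z`, applied on the Euclidean disc of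
radius `Im z` around `z`. -/
theorem IsHolomorphicMap.dist_div_dist_conj_le {p : ℍ → ℍ} (hp : IsHolomorphicMap p)
    {z w : ℍ} (hw : dist (w : ℂ) z < z.im) :
    dist (p w : ℂ) (p z) / dist (p w : ℂ) (conj (p z : ℂ)) ≤ dist (w : ℂ) z / z.im := by
  set a : ℂ := (p z : ℂ)
  set g : ℂ → ℂ := fun u => (extendByZero p u - a) / (extendByZero p u - conj a)
  have norm_g : ∀ u : ℍ, ‖g u‖ = dist (p u : ℂ) a / dist (p u : ℂ) (conj a) := fun u => by
    simp only [g, extendByZero_coe, norm_div, dist_eq_norm]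
  have hball := ball_coe_im_subset z
  have hd : DifferentiableOn ℂ g (ball (z : ℂ) z.im) := by
    refine ((hp.mono hball).sub_const a).div ((hp.mono hball).sub_const _) fun u hu => ?_
    lift u to ℍ using hball hu
    rw [extendByZero_coe, sub_ne_zero]
    exact coe_ne_conj_coe _ _
  have g_z : g z = 0 := by
    rw [← norm_eq_zero, norm_g, dist_self, zero_div]
  have hmaps : MapsTo g (ball (z : ℂ) z.im) (closedBall (g z) 1) := fun u hu => by
    lift u to ℍ using hball hu
    rw [mem_closedBall, g_z, dist_zero_right, norm_g]
    exact (dist_coe_div_dist_coe_conj_lt_one _ _).le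
  have h := Complex.dist_le_div_mul_dist_of_mapsTo_ball hd hmaps (mem_ball.2 hw)
  rwa [g_z, dist_zero_right, norm_g, one_div_mul_eq_div] at h

theorem IsHolomorphicMap.abs_mul_im_le {p : ℍ → ℍ} (hp : IsHolomorphicMap p) {t lam : ℝ}
    {z : ℍ} (heq : p (t +ᵥ z) = lam +ᵥ p z) (hz : |t| < z.im) :
    |lam| * z.im ≤ |t| * (|lam| + 2 * (p z).im) := by
  have h_dist : dist ((t +ᵥ z : ℍ) : ℂ) z = |t| := by
    rw [coe_vadd, dist_add_self_left, Complex.norm_real, Real.norm_eq_abs]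
  have h := hp.dist_div_dist_conj_le (h_dist ▸ hz)
  rw [heq, coe_vadd, h_dist, dist_add_self_left, Complex.norm_real, Real.norm_eq_abs] at h
  set a : ℂ := (p z : ℂ)
  have h_pos : 0 < dist ((lam : ℂ) + a) (conj a) :=
    dist_pos.2 (by simpa only [a, ← coe_vadd] using coe_ne_conj_coe (lam +ᵥ p z) (p z))
  have h_le : dist ((lam : ℂ) + a) (conj a) ≤ |lam| + 2 * (p z).im :=
    calc dist ((lam : ℂ) + a) (conj a) ≤ dist ((lam : ℂ) + a) a + dist a (conj a) :=
          dist_triangle _ _ _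
      _ = |lam| + 2 * (p z).im := by
          rw [dist_add_self_left, Complex.norm_real, Real.norm_eq_abs, Complex.dist_self_conj,
            coe_im, abs_of_pos (p z).im_pos]
  rw [div_le_div_iff₀ h_pos z.im_pos] at h
  nlinarith [abs_nonneg t]

/-- **Behavior of an equivariant holomorphic map at a cusp**: if `p : ℍ → ℍ` is holomorphic
and `p (z + 1) = p z + λ` for some nonzero real `λ`, then `Im (p z) → ∞` as `Im z → ∞`. -/
theorem im_tendsto_atTop_of_holomorphic_translation_equivariant
    (p : ℍ → ℍ) (hp : IsHolomorphicMap p) (lam : ℝ) (hlam : lam ≠ 0)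
    (heq : ∀ z : ℍ, p ((1 : ℝ) +ᵥ z) = lam +ᵥ p z) :
    Tendsto (fun z : ℍ => (p z).im) (comap UpperHalfPlane.im atTop) atTop := by
  have h_lin : Tendsto (fun x : ℝ => (|lam| * x - |lam|) / 2) atTop atTop :=
    (tendsto_atTop_add_const_right _ (-|lam|)
      (tendsto_id.const_mul_atTop (abs_pos.2 hlam))).atTop_div_const two_pos
  refine tendsto_atTop_mono' _ ?_ (h_lin.comp tendsto_comap)
  filter_upwards [tendsto_comap.eventually (eventually_gt_atTop 1)] with z hz
  have h := hp.abs_mul_im_le (heq z) (by rwa [abs_one])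
  simp only [Function.comp_apply, abs_one, one_mul] at h ⊢
  linarith
end

section
/- The semiconjugacy group of a nonconstant holomorphic self-map of ℍ is a closed subgroup: Let p : ℍ → ℍ be a nonconstant holomorphic map. Then the set G_p = {h ∈ SL(2,ℝ) : ∃ g ∈ SL(2,ℝ), ∀ z ∈ ℍ, p(h • z) = g • p(z)} is a subgroup of SL(2,ℝ) and is closed in the topology of SL(2,ℝ). -/
/-!
Semiconjugators compose and invert along with the maps they semiconjugate, so `G_p` is a
subgroup. For closedness fix `z₀`: `h ∈ G_p` iff `(h, p (h • z₀), p z₀)` is the image under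
`id × ((g, w) ↦ (g • w, w))` of a triple `(h, g, p z₀)` with `g` semiconjugating `h`. Since
`SL(2, ℝ)` acts properly on `ℍ` this map is proper, so it sends the closed set of such triples
to a closed set, and `G_p` is the preimage of that set under a continuous map.
-/

open UpperHalfPlane Matrix

local notation "SL2R" => Matrix.SpecialLinearGroup (Fin 2) ℝ

noncomputable instance : TopologicalSpace SL2R := instTopologicalSpaceSubtype

section Semiconjugacy

variable {G H X Y : Type*} [Group G] [MulAction G X] [Group H] [MulAction H Y]

variable (H) in
def semiconjugacySubgroup (p : X → Y) : Subgroup G where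
  carrier := {g | ∃ h : H, ∀ x, p (g • x) = h • p x}
  one_mem' := ⟨1, fun x => by simp⟩
  mul_mem' := by
    rintro a b ⟨ha, hpa⟩ ⟨hb, hpb⟩
    exact ⟨ha * hb, fun x => by rw [mul_smul, hpa, hpb, mul_smul]⟩
  inv_mem' := by
    rintro a ⟨h, hp⟩
    refine ⟨h⁻¹, fun x => ?_⟩
    rw [eq_inv_smul_iff, ← hp, smul_inv_smul]

variable [TopologicalSpace G] [TopologicalSpace H] [TopologicalSpace X] [TopologicalSpace Y]

theorem isClosed_setOf_semiconj [ContinuousSMul G X] [ContinuousSMul H Y] [T2Space Y]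
    {p : X → Y} (hp : Continuous p) :
    IsClosed {gh : G × H | ∀ x, p (gh.1 • x) = gh.2 • p x} := by
  simp only [Set.ofPred_forall]
  exact isClosed_iInter fun x => isClosed_eq (by fun_prop) (by fun_prop)

theorem isClosed_semiconjugacySubgroup [ContinuousSMul G X] [ProperSMul H Y] [T2Space Y]
    [Nonempty X] {p : X → Y} (hp : Continuous p) :
    IsClosed ((semiconjugacySubgroup H p : Subgroup G) : Set G) := by
  obtain ⟨x₀⟩ := ‹Nonempty X›
  let Φ : G × (H × Y) → G × (Y × Y) := Prod.map id fun hy => (hy.1 • hy.2, hy.2)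
  have hΦ : IsProperMap Φ := isProperMap_id.prodMap ProperSMul.isProperMap_smul_pair
  let T : Set (G × (H × Y)) :=
    {t | t.2.2 = p x₀} ∩ (fun t => (t.1, t.2.1)) ⁻¹' {gh | ∀ x, p (gh.1 • x) = gh.2 • p x}
  have hT : IsClosed T :=
    (isClosed_eq (by fun_prop) continuous_const).inter
      ((isClosed_setOf_semiconj hp).preimage (by fun_prop))
  have hS : ((semiconjugacySubgroup H p : Subgroup G) : Set G) =
      (fun g => (g, p (g • x₀), p x₀)) ⁻¹' (Φ '' T) := by
    ext g
    constructor
    · rintro ⟨h, hg⟩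
      exact ⟨(g, h, p x₀), ⟨rfl, hg⟩, by simp [Φ, hg x₀]⟩
    · rintro ⟨⟨g', h, y⟩, ⟨rfl, hg'⟩, hΦg⟩
      obtain rfl : g' = g := congrArg Prod.fst hΦg
      exact ⟨h, hg'⟩
  rw [hS]
  exact (hΦ.isClosedMap T hT).preimage (by fun_prop)

end Semiconjugacy

-- Mathlib's instance, restated for the topology on `SL2R` declared above: the two
-- topologies agree, but not up to reducible unfolding.
instance : ProperSMul SL2R ℍ := instProperSMul

theorem IsHolomorphicMap.continuous {p : ℍ → ℍ} (hp : IsHolomorphicMap p) : Continuous p := by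
  refine isEmbedding_coe.continuous_iff.mpr <|
    (hp.continuousOn.comp_continuous continuous_coe fun z => z.im_pos).congr fun z => ?_
  exact dif_pos z.im_pos

theorem semiconjugacy_group_isClosed_subgroup_general
    (p : ℍ → ℍ) (hp : IsHolomorphicMap p) :
    ∃ S : Subgroup SL2R,
      (S : Set SL2R) = {h : SL2R | ∃ g : SL2R, ∀ z : ℍ, p (h • z) = g • p z} ∧
      IsClosed (S : Set SL2R) :=
  ⟨semiconjugacySubgroup SL2R p, rfl, isClosed_semiconjugacySubgroup hp.continuous⟩

/-- **The semiconjugacy group of a nonconstant holomorphic self-map of `ℍ` is a closed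
subgroup**: for a nonconstant holomorphic `p : ℍ → ℍ`, the set
`G_p = {h : ∃ g, ∀ z, p (h • z) = g • p z}` is a subgroup of `SL(2,ℝ)` and is closed. -/
theorem semiconjugacy_group_isClosed_subgroup
    (p : ℍ → ℍ) (hp : IsHolomorphicMap p) (hnc : ∃ z₁ z₂ : ℍ, p z₁ ≠ p z₂) :
    ∃ S : Subgroup SL2R,
      (S : Set SL2R) = {h : SL2R | ∃ g : SL2R, ∀ z : ℍ, p (h • z) = g • p z} ∧
      IsClosed (S : Set SL2R) :=
  semiconjugacy_group_isClosed_subgroup_general p hp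
end
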